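/- arXiv:1504.04557 — 3 statements merged into one kernel-verified Lean document; each statement's English description precedes it below -/
import Mathlib

section
/- In Y_{d,n}^aff(q), define X_{i+1} := g_i X_i g_i recursively for i = 1,...,n-1. Then the elements t_1,...,t_n, X_1^{±1},...,X_n^{±1} pairwise commute. -/
/-!
Everything follows from the commutation relations of `X_1` by induction along the recursion
`X_{i+1} = g_i X_i g_i`. The relation `g_i t_j = t_{s_i(j)} g_i` shows that conjugating by `g_i`
on both sides permutes the `t`'s back, so each `X_i` commutes with the `t`'s. The braid relations
give that `g_k` commutes with `X_j` for `j ∉ {k, k+1}`, which turns `X_i X_j = X_j X_i` for `i < j`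
into the adjacent case `X_j X_{j+1} = X_{j+1} X_j`; that case is a braid-word computation starting
from (aff1). The inverses then commute because inverses of commuting units commute.
-/

open LaurentPolynomial Finset

noncomputable section

/-- The ring `R = ℂ[q, q⁻¹]` of Laurent polynomials over `ℂ`. -/
abbrev Rq := LaurentPolynomial ℂ

/-- The indeterminate `q`. -/
def qq : Rq := T 1

/-- `q⁻¹`. -/
def qqinv : Rq := T (-1)

/-- The transposition `s_i = (i, i+1)` acting on the index `j`. -/
def sAdj (i j : ℕ) : ℕ := if j = i then i + 1 else if j = i + 1 then i else j

/-- The transposition `s_{i,l} = (i, l)` acting on the index `j`. -/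
def sTrp (i l j : ℕ) : ℕ := if j = i then l else if j = l then i else j

/-- A realisation of the defining presentation of the affine Yokonuma--Hecke
algebra `Y_{d,n}^aff(q)` inside an `R`-algebra `A`:  elements
`t_1, …, t_n`, `g_1, …, g_{n-1}`, `X_1, X_1⁻¹` (together with the derived
elements `X_2, …, X_n` given by `X_{i+1} = g_i X_i g_i` and their inverses)
satisfying the defining relations (br1), (br2), (fr1)–(fr3), (aff1)–(aff3)
and (quad). -/
structure YHAff (A : Type*) [Ring A] [Algebra Rq A] (d n : ℕ) where
  t : ℕ → A
  g : ℕ → A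
  X : ℕ → A
  Xinv : ℕ → A
  br1 : ∀ i j, 1 ≤ i → i ≤ n - 1 → 1 ≤ j → j ≤ n - 1 → (i + 1 < j ∨ j + 1 < i) →
    g i * g j = g j * g i
  br2 : ∀ i, 1 ≤ i → i ≤ n - 2 → g i * g (i + 1) * g i = g (i + 1) * g i * g (i + 1)
  fr1 : ∀ i j, 1 ≤ i → i ≤ n → 1 ≤ j → j ≤ n → t i * t j = t j * t i
  fr2 : ∀ i j, 1 ≤ i → i ≤ n - 1 → 1 ≤ j → j ≤ n → g i * t j = t (sAdj i j) * g i
  fr3 : ∀ j, 1 ≤ j → j ≤ n → t j ^ d = 1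
  aff1 : X 1 * (g 1 * X 1 * g 1) = g 1 * X 1 * g 1 * X 1
  aff2 : ∀ i, 2 ≤ i → i ≤ n - 1 → X 1 * g i = g i * X 1
  aff3 : ∀ j, 1 ≤ j → j ≤ n → X 1 * t j = t j * X 1
  quad : ∀ i, 1 ≤ i → i ≤ n - 1 → g i ^ 2 =
    1 + algebraMap Rq A (qq - qqinv) *
      (algebraMap Rq A (C (d : ℂ)⁻¹) * ∑ k ∈ range d, t i ^ k * t (i + 1) ^ (d - k)) * g i
  Xrec : ∀ i, 1 ≤ i → i ≤ n - 1 → X (i + 1) = g i * X i * g i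
  XXinv : ∀ i, 1 ≤ i → i ≤ n → X i * Xinv i = 1
  XinvX : ∀ i, 1 ≤ i → i ≤ n → Xinv i * X i = 1

variable {A : Type*} [Ring A] [Algebra Rq A] {d n : ℕ}

/-- The idempotent `e_i = (1/d) ∑_{k=0}^{d-1} t_i^k t_{i+1}^{d-k}`. -/
def YHAff.e (Y : YHAff A d n) (i : ℕ) : A :=
  algebraMap Rq A (C (d : ℂ)⁻¹) * ∑ k ∈ range d, Y.t i ^ k * Y.t (i + 1) ^ (d - k)

/-- The idempotent `e_{i,l} = (1/d) ∑_{k=0}^{d-1} t_i^k t_l^{d-k}`. -/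
def YHAff.eil (Y : YHAff A d n) (i l : ℕ) : A :=
  algebraMap Rq A (C (d : ℂ)⁻¹) * ∑ k ∈ range d, Y.t i ^ k * Y.t l ^ (d - k)

/-- The scalar `q - q⁻¹` viewed inside `A`. -/
def cq (A : Type*) [Ring A] [Algebra Rq A] : A := algebraMap Rq A (qq - qqinv)

/-- `X_i^a` for `a : ℤ`, via `Xinv` for negative exponents. -/
def YHAff.zp (Y : YHAff A d n) (i : ℕ) (a : ℤ) : A :=
  if 0 ≤ a then Y.X i ^ a.toNat else Y.Xinv i ^ (-a).toNat

section Monoid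

variable {M : Type*} [Monoid M]

theorem commute_mul_mul_of_intertwine {a b u x v : M} (hu : a * u = u * b) (hx : Commute b x)
    (hv : b * v = v * a) : Commute a (u * x * v) :=
  calc a * (u * x * v) = a * u * x * v := by simp only [mul_assoc]
    _ = u * (b * x) * v := by rw [hu, mul_assoc u b x]
    _ = u * x * (b * v) := by rw [hx.eq]; simp only [mul_assoc]
    _ = u * x * v * a := by rw [hv]; simp only [mul_assoc]

/-- The step `X_j X_{j+1} = X_{j+1} X_j ⟹ X_{j+1} X_{j+2} = X_{j+2} X_{j+1}`,
with `a = g_j`, `b = g_{j+1}`, `x = X_j`: both products equal `a b x a x b a b`. -/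
theorem commute_braid_conj {a b x : M} (hab : a * b * a = b * a * b) (hbx : Commute b x)
    (hx : Commute x (a * x * a)) : Commute (a * x * a) (b * (a * x * a) * b) := by
  have hxb : x * b = b * x := hbx.eq.symm
  have hleft : a * x * a * (b * (a * x * a) * b) = a * b * x * a * (x * b) * a * b :=
    calc _ = a * x * (a * b * a) * x * a * b := by simp only [mul_assoc]
      _ = a * (x * b) * a * (b * x) * a * b := by rw [hab]; simp only [mul_assoc]
      _ = a * b * x * a * (b * x) * a * b := by rw [hxb]; simp only [mul_assoc]
      _ = a * b * x * a * (x * b) * a * b := by rw [hbx.eq]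
  have hright : b * (a * x * a) * b * (a * x * a) = a * b * x * a * (x * b) * a * b :=
    calc _ = b * a * x * (a * b * a) * x * a := by simp only [mul_assoc]
      _ = b * a * (x * b) * a * (b * x) * a := by rw [hab]; simp only [mul_assoc]
      _ = b * a * b * x * a * (b * x) * a := by rw [hxb]; simp only [mul_assoc]
      _ = a * b * (a * x * a * x) * b * a := by rw [hbx.eq, ← hab]; simp only [mul_assoc]
      _ = a * b * x * a * x * (a * b * a) := by rw [← hx.eq]; simp only [mul_assoc]
      _ = a * b * x * a * (x * b) * a * b := by rw [hab]; simp only [mul_assoc]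
  exact hleft.trans hright.symm

end Monoid

theorem sAdj_sAdj (i j : ℕ) : sAdj i (sAdj i j) = j := by
  unfold sAdj; split_ifs <;> omega

theorem one_le_sAdj {i j : ℕ} (hi : 1 ≤ i) (hj : 1 ≤ j) : 1 ≤ sAdj i j := by
  unfold sAdj; split_ifs <;> omega

theorem sAdj_le {i j : ℕ} (hi : i + 1 ≤ n) (hj : j ≤ n) : sAdj i j ≤ n := by
  unfold sAdj; split_ifs <;> omega

namespace YHAff

variable (Y : YHAff A d n)

theorem commute_X_t {i j : ℕ} (hi1 : 1 ≤ i) (hi2 : i ≤ n) (hj1 : 1 ≤ j) (hj2 : j ≤ n) :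
    Commute (Y.X i) (Y.t j) := by
  induction i, hi1 using Nat.le_induction generalizing j with
  | base => exact Y.aff3 j hj1 hj2
  | succ m hm ih =>
    have hm' : m ≤ n - 1 := by omega
    have hs1 := one_le_sAdj hm hj1
    have hs2 : sAdj m j ≤ n := sAdj_le (by omega) hj2
    have hgt := Y.fr2 m j hm hm' hj1 hj2
    have hgt' := Y.fr2 m (sAdj m j) hm hm' hs1 hs2
    rw [sAdj_sAdj] at hgt'
    rw [Y.Xrec m hm hm']
    exact (SemiconjBy.mul_left hgt' (ih (by omega) hs1 hs2)).mul_left hgt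

theorem commute_g_X {j k : ℕ} (hk1 : 1 ≤ k) (hk2 : k ≤ n - 1) (hj1 : 1 ≤ j) (hj2 : j ≤ n)
    (hjk : j ≠ k) (hjk' : j ≠ k + 1) : Commute (Y.g k) (Y.X j) := by
  induction j using Nat.strong_induction_on generalizing k with
  | _ j ih =>
    obtain rfl | hj : j = 1 ∨ 2 ≤ j := by omega
    · exact (Y.aff2 k (by omega) hk2).symm
    obtain ⟨m, rfl⟩ : ∃ m, j = m + 1 := ⟨j - 1, by omega⟩
    have hm : 1 ≤ m := by omega
    by_cases hmk : m = k + 1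
    · -- `j = k + 2`: by the braid relation, `g_k` passes through `g_{k+1} g_k` as `g_{k+1}`
      subst hmk
      have hbr := Y.br2 k hk1 (by omega)
      have hX : Y.X (k + 1 + 1) = Y.g (k + 1) * Y.g k * Y.X k * (Y.g k * Y.g (k + 1)) := by
        rw [Y.Xrec (k + 1) hm (by omega), Y.Xrec k hk1 (by omega)]; simp only [mul_assoc]
      rw [hX]
      refine commute_mul_mul_of_intertwine (b := Y.g (k + 1)) ?_ ?_ ?_
      · rw [← mul_assoc, hbr]
      · exact ih k (by omega) (by omega) (by omega) hk1 (by omega) (by omega) (by omega)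
      · rw [← mul_assoc, hbr]
    · have hgg : Commute (Y.g k) (Y.g m) := Y.br1 k m hk1 hk2 hm (by omega) (by omega)
      rw [Y.Xrec m hm (by omega)]
      exact (hgg.mul_right (ih m (by omega) hk1 hk2 hm (by omega) (by omega) (by omega))).mul_right
        hgg

theorem commute_X_X_succ {j : ℕ} (hj1 : 1 ≤ j) (hj2 : j ≤ n - 1) :
    Commute (Y.X j) (Y.X (j + 1)) := by
  induction j, hj1 using Nat.le_induction with
  | base => rw [Y.Xrec 1 le_rfl hj2]; exact Y.aff1
  | succ m hm ih =>
    have hX := ih (by omega)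
    rw [Y.Xrec m hm (by omega)] at hX
    rw [Y.Xrec (m + 1) (by omega) hj2, Y.Xrec m hm (by omega)]
    exact commute_braid_conj (Y.br2 m hm (by omega))
      (Y.commute_g_X (by omega) (by omega) hm (by omega) (by omega) (by omega)) hX

theorem commute_X_X_of_lt {i j : ℕ} (hi : 1 ≤ i) (hij : i < j) (hj : j ≤ n) :
    Commute (Y.X i) (Y.X j) := by
  induction j, hij using Nat.le_induction with
  | base => exact Y.commute_X_X_succ hi (by omega)
  | succ m hm ih =>
    have hgX := Y.commute_g_X (j := i) (k := m) (by omega) (by omega) hi (by omega) (by omega)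
      (by omega)
    rw [Y.Xrec m (by omega) (by omega)]
    exact (hgX.symm.mul_right (ih (by omega))).mul_right hgX.symm

theorem commute_X_X {i j : ℕ} (hi1 : 1 ≤ i) (hi2 : i ≤ n) (hj1 : 1 ≤ j) (hj2 : j ≤ n) :
    Commute (Y.X i) (Y.X j) := by
  rcases lt_trichotomy i j with h | rfl | h
  · exact Y.commute_X_X_of_lt hi1 h hj2
  · exact Commute.refl _
  · exact (Y.commute_X_X_of_lt hj1 h hi2).symm

theorem commute_Xinv_left {i : ℕ} (hi1 : 1 ≤ i) (hi2 : i ≤ n) {a : A}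
    (h : Commute (Y.X i) a) : Commute (Y.Xinv i) a :=
  Commute.units_inv_left (u := ⟨Y.X i, Y.Xinv i, Y.XXinv i hi1 hi2, Y.XinvX i hi1 hi2⟩) h

end YHAff

theorem stmt5_general {A : Type*} [Ring A] [Algebra Rq A] {d n : ℕ}
    (Y : YHAff A d n) (i j : ℕ) (hi1 : 1 ≤ i) (hi2 : i ≤ n)
    (hj1 : 1 ≤ j) (hj2 : j ≤ n) :
    Y.t i * Y.t j = Y.t j * Y.t i ∧
    Y.X i * Y.X j = Y.X j * Y.X i ∧
    Y.X i * Y.t j = Y.t j * Y.X i ∧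
    Y.Xinv i * Y.X j = Y.X j * Y.Xinv i ∧
    Y.Xinv i * Y.t j = Y.t j * Y.Xinv i ∧
    Y.Xinv i * Y.Xinv j = Y.Xinv j * Y.Xinv i := by
  have hXX := Y.commute_X_X hi1 hi2 hj1 hj2
  have hXt := Y.commute_X_t hi1 hi2 hj1 hj2
  have hXinvXinv : Commute (Y.Xinv i) (Y.Xinv j) :=
    Y.commute_Xinv_left hi1 hi2 (Y.commute_Xinv_left hj1 hj2 hXX.symm).symm
  exact ⟨Y.fr1 i j hi1 hi2 hj1 hj2, hXX, hXt, Y.commute_Xinv_left hi1 hi2 hXX,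
    Y.commute_Xinv_left hi1 hi2 hXt, hXinvXinv⟩

/-- In `Y_{d,n}^aff(q)`, the elements `t_1, …, t_n, X_1^{±1}, …, X_n^{±1}`
form a commutative family. -/
theorem stmt5 {A : Type*} [Ring A] [Algebra Rq A] {d n : ℕ} (hd : 0 < d)
    (Y : YHAff A d n) (i j : ℕ) (hi1 : 1 ≤ i) (hi2 : i ≤ n)
    (hj1 : 1 ≤ j) (hj2 : j ≤ n) :
    Y.t i * Y.t j = Y.t j * Y.t i ∧
    Y.X i * Y.X j = Y.X j * Y.X i ∧
    Y.X i * Y.t j = Y.t j * Y.X i ∧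
    Y.Xinv i * Y.X j = Y.X j * Y.Xinv i ∧
    Y.Xinv i * Y.t j = Y.t j * Y.Xinv i ∧
    Y.Xinv i * Y.Xinv j = Y.Xinv j * Y.Xinv i :=
  stmt5_general Y i j hi1 hi2 hj1 hj2
end
end

section
/- In Y_{d,n}^aff(q), for each i = 1,...,n-1 and each positive integer a: g_i X_i^a = X_{i+1}^a g_i - (q - q^{-1}) e_i Σ_{k=0}^{a-1} X_i^k X_{i+1}^{a-k}. -/
open LaurentPolynomial Finset

noncomputable section

variable {A : Type*} [Ring A] [Algebra Rq A] {d n : ℕ}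

/-! Since `X_{i+1} = g_i X_i g_i`, the quadratic relation gives
`X_{i+1} g_i = g_i X_i g_i² = g_i X_i + (q - q⁻¹) e_i X_{i+1}`, because `e_i` commutes with `g_i`
and `X_i`. As `X_i`, `X_{i+1}` and `e_i` commute pairwise, multiplying by `X_i` on the right
passes from `a` to `a + 1`. The commutation facts follow by induction on `i` from the affine
relations: conjugation by `g_i` swaps `t_i` and `t_{i+1}`, which leaves `e_i` unchanged, and
`X_{i+1}, X_{i+2}` commute by the braid relation. -/

theorem SemiconjBy.finset_sum_right {ι R : Type*} [NonUnitalNonAssocSemiring R] {a : R}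
    {s : Finset ι} {f g : ι → R} (h : ∀ i ∈ s, SemiconjBy a (f i) (g i)) :
    SemiconjBy a (∑ i ∈ s, f i) (∑ i ∈ s, g i) := by
  rw [SemiconjBy, mul_sum, sum_mul]
  exact sum_congr rfl h

theorem Commute.sum_range_pow_mul_pow_sub_comm {R : Type*} [Semiring R] {x y : R} {d : ℕ}
    (hxy : Commute x y) (hx : x ^ d = 1) (hy : y ^ d = 1) :
    ∑ k ∈ range d, x ^ k * y ^ (d - k) = ∑ k ∈ range d, y ^ k * x ^ (d - k) := by
  set f : ℕ → R := fun k => x ^ k * y ^ (d - k)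
  -- `f 0 = y ^ d = 1 = x ^ d = f d`, so shifting the index does not change the sum.
  have hshift : ∑ k ∈ range d, f (k + 1) = ∑ k ∈ range d, f k := by
    obtain _ | m := d
    · simp
    · rw [sum_range_succ' f, sum_range_succ (fun k => f (k + 1)),
        show f 0 = f (m + 1) by simp [f, hx, hy]]
  calc ∑ k ∈ range d, f k = ∑ k ∈ range d, f (d - 1 - k + 1) :=
        hshift.symm.trans (sum_range_reflect (fun k => f (k + 1)) d).symm
    _ = ∑ k ∈ range d, y ^ k * x ^ (d - k) := by
        refine sum_congr rfl fun k hk => ?_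
        have hkd : k < d := mem_range.mp hk
        simp only [f, show d - 1 - k + 1 = d - k by omega, show d - (d - k) = k by omega]
        exact hxy.pow_pow _ _

theorem commute_mul_mul_of_braid {M : Type*} [Monoid M] {a b c : M}
    (hbc : b * c * b = c * b * c) (hac : Commute a c) (ha : Commute a (b * a * b)) :
    Commute (b * a * b) (c * (b * a * b) * c) := by
  have left : b * a * b * (c * (b * a * b) * c) = b * c * a * b * (a * c) * b * c :=
    calc _ = b * a * (b * c * b) * a * b * c := by simp only [mul_assoc]
      _ = b * (a * c) * b * c * a * b * c := by rw [hbc]; simp only [mul_assoc]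
      _ = b * c * a * b * (c * a) * b * c := by rw [hac.eq]; simp only [mul_assoc]
      _ = _ := by rw [← hac.eq]
  have right : c * (b * a * b) * c * (b * a * b) = b * c * a * b * (a * c) * b * c :=
    calc _ = c * b * a * (b * c * b) * a * b := by simp only [mul_assoc]
      _ = c * b * (a * c) * b * c * a * b := by rw [hbc]; simp only [mul_assoc]
      _ = c * b * c * a * b * (c * a) * b := by rw [hac.eq]; simp only [mul_assoc]
      _ = c * b * c * a * b * a * c * b := by rw [← hac.eq]; simp only [mul_assoc]
      _ = b * c * (b * a * b * a) * c * b := by rw [← hbc]; simp only [mul_assoc]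
      _ = b * c * a * b * a * (b * c * b) := by rw [← ha.eq]; simp only [mul_assoc]
      _ = _ := by rw [hbc]; simp only [mul_assoc]
  exact left.trans right.symm

theorem mul_eq_sub_of_sq_eq_one_add_mul {R : Type*} [Ring R] {g x y u : R}
    (hy : y = g * x * g) (hg : g ^ 2 = 1 + u * g) (hux : Commute u x) (hug : Commute u g) :
    g * x = y * g - u * y := by
  rw [eq_sub_iff_add_eq]
  calc g * x + u * y = g * x + u * (g * x) * g := by rw [hy]; simp only [mul_assoc]
    _ = g * x * g ^ 2 := by rw [hg, mul_add, mul_one, (hug.mul_right hux).eq, mul_assoc]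
    _ = y * g := by rw [hy, sq]; simp only [mul_assoc]

theorem mul_pow_eq_sub_of_mul_eq_sub {R : Type*} [Ring R] {g x y u : R}
    (h : g * x = y * g - u * y) (hxy : Commute x y) (huy : Commute u y) (a : ℕ) :
    g * x ^ a = y ^ a * g - u * ∑ k ∈ range a, x ^ k * y ^ (a - k) := by
  induction a with
  | zero => simp
  | succ a ih =>
    have hsum : ∑ k ∈ range (a + 1), x ^ k * y ^ (a + 1 - k) =
        y ^ (a + 1) + (∑ k ∈ range a, x ^ k * y ^ (a - k)) * x := by
      rw [sum_range_succ', sum_mul, add_comm]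
      refine congrArg₂ _ (by simp) (sum_congr rfl fun k _ => ?_)
      rw [Nat.succ_sub_succ, pow_succ, mul_assoc, mul_assoc, (hxy.pow_right _).eq]
    calc g * x ^ (a + 1) = (y ^ a * g - u * ∑ k ∈ range a, x ^ k * y ^ (a - k)) * x := by
          rw [pow_succ, ← mul_assoc, ih]
      _ = y ^ a * (y * g - u * y) - u * ((∑ k ∈ range a, x ^ k * y ^ (a - k)) * x) := by
          rw [← h]; simp only [sub_mul, mul_assoc]
      _ = _ := by
          rw [hsum, mul_sub, ← mul_assoc (y ^ a) u y, ← (huy.pow_right a).eq, mul_assoc u,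
            ← mul_assoc, ← pow_succ, mul_add, sub_sub]

theorem sAdj_bounds {n i j : ℕ} (hi : 1 ≤ i) (hin : i + 1 ≤ n) (hj : 1 ≤ j) (hjn : j ≤ n) :
    1 ≤ sAdj i j ∧ sAdj i j ≤ n := by
  unfold sAdj; split_ifs <;> omega

namespace YHAff

variable (Y : YHAff A d n)

theorem commute_X_t_s9 {i j : ℕ} (hi : 1 ≤ i) (hin : i ≤ n) (hj : 1 ≤ j) (hjn : j ≤ n) :
    Commute (Y.X i) (Y.t j) := by
  induction i, hi using Nat.le_induction generalizing j with
  | base => exact Y.aff3 j hj hjn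
  | succ m hm ih =>
    obtain ⟨hs, hsn⟩ := sAdj_bounds hm hin hj hjn
    have hg : SemiconjBy (Y.g m) (Y.t j) (Y.t (sAdj m j)) := Y.fr2 m j hm (by omega) hj hjn
    have hg' : SemiconjBy (Y.g m) (Y.t (sAdj m j)) (Y.t j) := by
      have h := Y.fr2 m (sAdj m j) hm (by omega) hs hsn
      rwa [sAdj_sAdj] at h
    rw [Y.Xrec m hm (by omega)]
    exact (hg'.mul_left (ih (by omega) hs hsn)).mul_left hg

theorem commute_X_g {i j : ℕ} (hi : 1 ≤ i) (hij : i + 1 ≤ j) (hjn : j ≤ n - 1) :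
    Commute (Y.X i) (Y.g j) := by
  induction i, hi using Nat.le_induction with
  | base => exact Y.aff2 j hij hjn
  | succ m hm ih =>
    have hgg : Commute (Y.g m) (Y.g j) :=
      Y.br1 m j hm (by omega) (by omega) hjn (Or.inl (by omega))
    rw [Y.Xrec m hm (by omega)]
    exact (hgg.mul_left (ih (by omega))).mul_left hgg

theorem commute_X_X_succ_s9 {i : ℕ} (hi : 1 ≤ i) (hin : i ≤ n - 1) :
    Commute (Y.X i) (Y.X (i + 1)) := by
  induction i, hi using Nat.le_induction with
  | base => rw [Y.Xrec 1 le_rfl hin]; exact Y.aff1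
  | succ m hm ih =>
    have ih := ih (by omega)
    rw [Y.Xrec m hm (by omega)] at ih
    rw [Y.Xrec (m + 1) (by omega) hin, Y.Xrec m hm (by omega)]
    exact commute_mul_mul_of_braid (Y.br2 m hm (by omega)) (Y.commute_X_g hm le_rfl hin) ih

theorem semiconjBy_eil {x : A} {i l i' l' : ℕ} (hi : SemiconjBy x (Y.t i) (Y.t i'))
    (hl : SemiconjBy x (Y.t l) (Y.t l')) : SemiconjBy x (Y.eil i l) (Y.eil i' l') :=
  SemiconjBy.mul_right (Algebra.commute_algebraMap_left _ x).symm
    (SemiconjBy.finset_sum_right fun k _ => (hi.pow_right k).mul_right (hl.pow_right (d - k)))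

theorem eil_comm {i l : ℕ} (hi : 1 ≤ i) (hin : i ≤ n) (hl : 1 ≤ l) (hln : l ≤ n) :
    Y.eil i l = Y.eil l i :=
  congrArg (_ * ·) (Commute.sum_range_pow_mul_pow_sub_comm (Y.fr1 i l hi hin hl hln)
    (Y.fr3 i hi hin) (Y.fr3 l hl hln))

theorem commute_X_e {m i : ℕ} (hm : 1 ≤ m) (hmn : m ≤ n) (hi : 1 ≤ i) (hin : i ≤ n - 1) :
    Commute (Y.X m) (Y.e i) :=
  Y.semiconjBy_eil (Y.commute_X_t_s9 hm hmn hi (by omega))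
    (Y.commute_X_t_s9 hm hmn (by omega) (by omega))

theorem commute_g_e {i : ℕ} (hi : 1 ≤ i) (hin : i ≤ n - 1) : Commute (Y.g i) (Y.e i) := by
  have h : SemiconjBy (Y.g i) (Y.eil i (i + 1)) (Y.eil (i + 1) i) := by
    simpa [sAdj] using Y.semiconjBy_eil (Y.fr2 i i hi hin hi (by omega))
      (Y.fr2 i (i + 1) hi hin (by omega) (by omega))
  rwa [Y.eil_comm (by omega) (by omega) hi (by omega)] at h

end YHAff

theorem stmt9_general {A : Type*} [Ring A] [Algebra Rq A] {d n : ℕ}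
    (Y : YHAff A d n) (i : ℕ) (h1 : 1 ≤ i) (h2 : i ≤ n - 1) (a : ℕ) :
    Y.g i * Y.X i ^ a = Y.X (i + 1) ^ a * Y.g i -
      cq A * Y.e i * ∑ k ∈ range a, Y.X i ^ k * Y.X (i + 1) ^ (a - k) := by
  have hcq (x : A) : Commute (cq A) x := Algebra.commute_algebraMap_left _ x
  have hX_e := Y.commute_X_e h1 (by omega) h1 h2
  have hXsucc_e := Y.commute_X_e (m := i + 1) (by omega) (by omega) h1 h2
  have hg_e := Y.commute_g_e h1 h2
  have base : Y.g i * Y.X i = Y.X (i + 1) * Y.g i - cq A * Y.e i * Y.X (i + 1) :=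
    mul_eq_sub_of_sq_eq_one_add_mul (Y.Xrec i h1 h2) (Y.quad i h1 h2)
      ((hcq _).mul_left hX_e.symm) ((hcq _).mul_left hg_e.symm)
  exact mul_pow_eq_sub_of_mul_eq_sub base (Y.commute_X_X_succ_s9 h1 h2)
    ((hcq _).mul_left hXsucc_e.symm) a

/-- In `Y_{d,n}^aff(q)`:
`g_i X_i^a = X_{i+1}^a g_i - (q-q⁻¹) e_i ∑_{k=0}^{a-1} X_i^k X_{i+1}^{a-k}`. -/
theorem stmt9 {A : Type*} [Ring A] [Algebra Rq A] {d n : ℕ} (hd : 0 < d)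
    (Y : YHAff A d n) (i : ℕ) (h1 : 1 ≤ i) (h2 : i ≤ n - 1) (a : ℕ) (ha : 1 ≤ a) :
    Y.g i * Y.X i ^ a = Y.X (i + 1) ^ a * Y.g i -
      cq A * Y.e i * ∑ k ∈ range a, Y.X i ^ k * Y.X (i + 1) ^ (a - k) :=
  stmt9_general Y i h1 h2 a

end
end

section
/- Let T = (Z/dZ)^n with generators t_1,...,t_n. In C[T], for any t ∈ T, any τ ∈ T, and any i,l ∈ {1,...,n}, one has τ t s_{i,l}(τ^{-1}) e_{i,l} = t e_{i,l}, where s_{i,l}(τ^{-1}) denotes the image of τ^{-1} under the transposition (i,l) permuting coordinates, and e_{i,l} := (1/d) Σ_{k=0}^{d-1} t_i^k t_l^{d-k}. -/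
open Finset

noncomputable section

/-- The group `T = (ℤ/dℤ)^n` (written multiplicatively). -/
abbrev Tgr (d n : ℕ) := Fin n → Multiplicative (ZMod d)

/-- The standard generator `t_j` of `(ℤ/dℤ)^n`. -/
def tgen (d n : ℕ) (j : Fin n) : Tgr d n :=
  fun k => Multiplicative.ofAdd (if k = j then (1 : ZMod d) else 0)

/-- The complex group algebra `ℂ[(ℤ/dℤ)^n]`. -/
abbrev CT (d n : ℕ) := MonoidAlgebra ℂ (Tgr d n)

/-- The generator `t_j` inside the group algebra. -/
def tC (d n : ℕ) (j : Fin n) : CT d n := MonoidAlgebra.of ℂ (Tgr d n) (tgen d n j)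

/-- The element `e_{i,l} = (1/d) ∑_{k=0}^{d-1} t_i^k t_l^{d-k}` of `ℂ[(ℤ/dℤ)^n]`. -/
def eC (d n : ℕ) (i l : Fin n) : CT d n :=
  (d : ℂ)⁻¹ • ∑ k ∈ range d, tC d n i ^ k * tC d n l ^ (d - k)

/-! Put `u = t_i t_l⁻¹`. Since `t_l ^ d = 1`, each `t_i^k t_l^(d-k)` equals `u^k`, so `d • e_{i,l}` is
the geometric sum `∑_{k<d} u^k`, which `u` (hence every power of `u`) fixes by left multiplication
because `u ^ d = 1`. Finally `τ s_{i,l}(τ⁻¹)` is the power `u^a` with `a = τ_i - τ_l`, and `T` is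
commutative. -/

theorem mul_geom_sum_eq_self_of_pow_eq_one {R : Type*} [Ring R] {x : R} {d : ℕ} (h : x ^ d = 1) :
    x * ∑ k ∈ range d, x ^ k = ∑ k ∈ range d, x ^ k := by
  have := mul_geom_sum x d
  rwa [h, sub_self, sub_mul, one_mul, sub_eq_zero] at this

theorem MonoidHom.map_zpow_mul_eq_self {G M : Type*} [Group G] [Monoid M] (f : G →* M) {g : G}
    {x : M} (h : f g * x = x) (z : ℤ) : f (g ^ z) * x = x := by
  have h_inv : f g⁻¹ * x = x := by
    conv_lhs => rw [← h, ← mul_assoc, ← map_mul, inv_mul_cancel, map_one, one_mul]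
  induction z using Int.induction_on with
  | zero => rw [zpow_zero, map_one, one_mul]
  | succ z ih => rw [zpow_add_one, map_mul, mul_assoc, h, ih]
  | pred z ih => rw [zpow_sub_one, map_mul, mul_assoc, h_inv, ih]

theorem tgen_eq_mulSingle (d n : ℕ) (j : Fin n) :
    tgen d n j = Pi.mulSingle j (Multiplicative.ofAdd 1) := by
  funext k
  by_cases hk : k = j <;> simp [tgen, hk]

theorem tgen_pow_self (d n : ℕ) (j : Fin n) : tgen d n j ^ d = 1 := by
  rw [tgen_eq_mulSingle, ← Pi.mulSingle_pow, ← ofAdd_nsmul, nsmul_one, ZMod.natCast_self,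
    ofAdd_zero, Pi.mulSingle_one]

theorem tgen_pow_mul_tgen_pow_sub {d n k : ℕ} (hk : k ≤ d) (i l : Fin n) :
    tgen d n i ^ k * tgen d n l ^ (d - k) = (tgen d n i / tgen d n l) ^ k := by
  rw [pow_sub _ hk, tgen_pow_self, one_mul, div_pow, div_eq_mul_inv]

theorem eC_eq_smul_geom_sum (d n : ℕ) (i l : Fin n) :
    eC d n i l = (d : ℂ)⁻¹ •
      ∑ k ∈ range d, MonoidAlgebra.of ℂ (Tgr d n) (tgen d n i / tgen d n l) ^ k := by
  rw [eC]
  congr 1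
  refine sum_congr rfl fun k hk => ?_
  rw [tC, tC, ← map_pow, ← map_pow, ← map_mul, ← map_pow,
    tgen_pow_mul_tgen_pow_sub (mem_range.mp hk).le]

-- An integer lift rather than `ZMod.val`, so that `d = 0` (where `ZMod 0 = ℤ`) is covered too.
theorem ofAdd_one_zpow_cast {d : ℕ} (x : Multiplicative (ZMod d)) :
    Multiplicative.ofAdd (1 : ZMod d) ^ (ZMod.cast (Multiplicative.toAdd x) : ℤ) = x := by
  rw [← ofAdd_zsmul, zsmul_one, ZMod.intCast_zmod_cast, ofAdd_toAdd]

theorem mul_comp_swap_inv_eq_zpow {d n : ℕ} (τ : Tgr d n) (i l : Fin n) :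
    τ * (τ⁻¹ ∘ ⇑(Equiv.swap i l)) =
      (tgen d n i / tgen d n l) ^ (ZMod.cast (Multiplicative.toAdd (τ i / τ l)) : ℤ) := by
  funext m
  rw [Pi.mul_apply, Pi.pow_apply, Pi.div_apply, tgen_eq_mulSingle, tgen_eq_mulSingle]
  rcases eq_or_ne m i with rfl | hmi
  · rcases eq_or_ne m l with rfl | hml
    · simp
    · rw [Pi.mulSingle_eq_same, Pi.mulSingle_eq_of_ne hml, div_one, ofAdd_one_zpow_cast,
        Function.comp_apply, Equiv.swap_apply_left, Pi.inv_apply, div_eq_mul_inv]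
  · rcases eq_or_ne m l with rfl | hml
    · rw [Pi.mulSingle_eq_same, Pi.mulSingle_eq_of_ne hmi, one_div, inv_zpow,
        ofAdd_one_zpow_cast, Function.comp_apply, Equiv.swap_apply_right, Pi.inv_apply, inv_div,
        div_eq_mul_inv]
    · simp [hmi, hml, Equiv.swap_apply_of_ne_of_ne hmi hml]

theorem of_mul_eC {d n : ℕ} (τ : Tgr d n) (i l : Fin n) :
    MonoidAlgebra.of ℂ (Tgr d n) (τ * (τ⁻¹ ∘ ⇑(Equiv.swap i l))) * eC d n i l = eC d n i l := by
  have hu : MonoidAlgebra.of ℂ (Tgr d n) (tgen d n i / tgen d n l) ^ d = 1 := by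
    rw [← map_pow, div_pow, tgen_pow_self, tgen_pow_self, div_one, map_one]
  rw [mul_comp_swap_inv_eq_zpow, eC_eq_smul_geom_sum, mul_smul_comm,
    MonoidHom.map_zpow_mul_eq_self _ (mul_geom_sum_eq_self_of_pow_eq_one hu)]

theorem stmt15_general {d n : ℕ} (t τ : Tgr d n) (i l : Fin n) :
    MonoidAlgebra.of ℂ (Tgr d n) (τ * t * (τ⁻¹ ∘ ⇑(Equiv.swap i l))) * eC d n i l =
    MonoidAlgebra.of ℂ (Tgr d n) t * eC d n i l := by
  rw [mul_comm τ t, mul_assoc, map_mul, mul_assoc, of_mul_eC]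

/-- In `ℂ[(ℤ/dℤ)^n]`:  `τ t s_{i,l}(τ⁻¹) e_{i,l} = t e_{i,l}`, where
`s_{i,l}(τ⁻¹) = τ⁻¹ ∘ (i,l)` is the image of `τ⁻¹` under the transposition
`(i,l)` permuting the coordinates. -/
theorem stmt15 {d n : ℕ} (hd : 0 < d) (t τ : Tgr d n) (i l : Fin n) :
    MonoidAlgebra.of ℂ (Tgr d n) (τ * t * (τ⁻¹ ∘ ⇑(Equiv.swap i l))) * eC d n i l =
    MonoidAlgebra.of ℂ (Tgr d n) t * eC d n i l :=
  stmt15_general t τ i l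

end
end
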